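/- For any real numbers x and y with 2 ≤ y ≤ x, one has Σ_{n ≤ x/y} τ(φ(n))/n ≪ ((log x)⁵ / x)·Σ_{n ≤ x} τ(φ(n)), with an absolute implied constant. -/

import Mathlib

/-!
For `n ≤ x / y` there are `≫ x / (n log x)` primes `p ≤ x / n` (Chebyshev), and
`τ(φ(n)) ≤ τ(φ(np))` because `φ(n) ∣ φ(np)`. Hence
`(x / log x) Σ_{n ≤ x/y} τ(φ(n)) / n ≪ Σ_{np ≤ x} τ(φ(np))`, and since an integer `m ≤ x` has
at most `log₂ x` prime factors, the right side is `≪ log x · Σ_{m ≤ x} τ(φ(m))`. This gives the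
bound with `(log x)²` in place of `(log x)⁵`.
-/

open Filter Finset Real

/-- The number-of-divisors function τ. -/
noncomputable def tauN (n : ℕ) : ℕ := n.divisors.card

lemma tauN_totient_le_of_dvd {m n : ℕ} (hn : n ≠ 0) (h : m ∣ n) :
    tauN m.totient ≤ tauN n.totient :=
  card_le_card <| Nat.divisors_subset_of_dvd (Nat.totient_pos.mpr (Nat.pos_of_ne_zero hn)).ne'
    (Nat.totient_dvd_of_dvd h)

lemma card_primeFactors_le_log (m : ℕ) : #m.primeFactors ≤ Nat.log 2 m := by
  rcases eq_or_ne m 0 with rfl | hm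
  · simp
  refine (Nat.le_log_iff_pow_le one_lt_two hm).mpr ?_
  calc 2 ^ #m.primeFactors ≤ ∏ p ∈ m.primeFactors, p :=
        pow_card_le_prod _ _ _ fun p hp => (Nat.prime_of_mem_primeFactors hp).two_le
    _ ≤ m := Nat.le_of_dvd (Nat.pos_of_ne_zero hm) (Nat.prod_primeFactors_dvd m)

/-- Every `m ≤ X` arises as `n * p` with `p` prime in at most `ω(m) ≤ log₂ X` ways. -/
lemma sum_mul_card_primesLE_div_le {f : ℕ → ℝ} (hf₀ : ∀ m, 0 ≤ f m)
    (hf : ∀ n p, n ≠ 0 → p.Prime → f n ≤ f (n * p)) (T X : ℕ) :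
    ∑ n ∈ Icc 1 T, f n * #(Nat.primesLE (X / n)) ≤ Nat.log 2 X * ∑ m ∈ Icc 1 X, f m := by
  set S := (Icc 1 T).sigma fun n => Nat.primesLE (X / n)
  let g : (Σ _ : ℕ, ℕ) → Σ _ : ℕ, ℕ := fun q => ⟨q.1 * q.2, q.2⟩
  have hmem : ∀ q ∈ S, 1 ≤ q.1 ∧ q.2.Prime ∧ q.1 * q.2 ≤ X := by
    simp only [S, mem_sigma, mem_Icc, Nat.mem_primesLE, and_imp]
    intro q hq _ hp hpr
    exact ⟨hq, hpr, by rw [mul_comm]; exact (Nat.le_div_iff_mul_le hq).mp hp⟩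
  have hg : Set.InjOn g S := by
    rintro ⟨n, p⟩ hq ⟨n', p'⟩ hq' h
    simp only [g, Sigma.mk.injEq, heq_eq_eq] at h
    obtain ⟨h, rfl⟩ := h
    have := (hmem _ hq).2.1.pos
    simp [Nat.eq_of_mul_eq_mul_right this h]
  have hgS : S.image g ⊆ (Icc 1 X).sigma Nat.primeFactors := by
    simp only [subset_iff, mem_image, mem_sigma, mem_Icc, Nat.mem_primeFactors]
    rintro _ ⟨q, hq, rfl⟩
    obtain ⟨h1, hp, hX⟩ := hmem q hq
    exact ⟨⟨Nat.one_le_iff_ne_zero.mpr (Nat.mul_ne_zero (by omega) hp.ne_zero), hX⟩,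
      hp, dvd_mul_left _ _, Nat.mul_ne_zero (by omega) hp.ne_zero⟩
  calc ∑ n ∈ Icc 1 T, f n * #(Nat.primesLE (X / n))
      ≤ ∑ n ∈ Icc 1 T, ∑ p ∈ Nat.primesLE (X / n), f (n * p) := by
        gcongr with n hn
        rw [mul_comm, ← nsmul_eq_mul]
        exact card_nsmul_le_sum _ _ _ fun p hp =>
          hf n p (Nat.one_le_iff_ne_zero.mp (mem_Icc.mp hn).1) (Nat.prime_of_mem_primesLE hp)
    _ = ∑ q ∈ S.image g, f q.1 := by rw [sum_image hg, sum_sigma]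
    _ ≤ ∑ q ∈ (Icc 1 X).sigma Nat.primeFactors, f q.1 :=
        sum_le_sum_of_subset_of_nonneg hgS fun _ _ _ => hf₀ _
    _ = ∑ m ∈ Icc 1 X, #m.primeFactors * f m := by simp [sum_sigma]
    _ ≤ ∑ m ∈ Icc 1 X, Nat.log 2 X * f m := by
        refine sum_le_sum fun m hm => mul_le_mul_of_nonneg_right ?_ (hf₀ m)
        exact_mod_cast (card_primeFactors_le_log m).trans (Nat.log_mono_right (mem_Icc.mp hm).2)
    _ = Nat.log 2 X * ∑ m ∈ Icc 1 X, f m := (mul_sum ..).symm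

lemma succ_pow_five_le_sixteen_pow {n : ℕ} (hn : 2 ≤ n) : (n + 1) ^ 5 ≤ 16 ^ n := by
  induction n, hn using Nat.le_induction with
  | base => norm_num
  | succ n hn ih =>
    have : (2 * (n + 2)) ^ 5 ≤ (3 * (n + 1)) ^ 5 := Nat.pow_le_pow_left (by omega) 5
    rw [mul_pow, mul_pow] at this
    rw [pow_succ' 16 n, show n + 1 + 1 = n + 2 by rfl]
    omega

-- `ψ(n) ≤ π(n) log n`, and `ψ(n) ≥ n log 2 - log (n + 1) ≥ n log 2 / 5`.
lemma card_primesLE_mul_log_ge {n : ℕ} (hn : 2 ≤ n) :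
    n * log 2 / 5 ≤ #(Nat.primesLE n) * log n := by
  have hψ := (Chebyshev.psi_ge n).trans (Chebyshev.psi_le_primeCounting_mul_log n)
  rw [← Nat.primesLE_card_eq_primeCounting] at hψ
  have : 5 * log (n + 1) ≤ 4 * n * log 2 := by
    have := log_le_log (by positivity) (show ((n : ℝ) + 1) ^ 5 ≤ 2 ^ (4 * n) by
      rw [pow_mul]; exact_mod_cast succ_pow_five_le_sixteen_pow hn)
    rw [log_pow, log_pow] at this
    push_cast at this
    linarith
  linarith

lemma card_primesLE_floor_mul_log_ge {t : ℝ} (ht : 2 ≤ t) :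
    t * log 2 / 10 ≤ #(Nat.primesLE ⌊t⌋₊) * log t := by
  have hM : 2 ≤ ⌊t⌋₊ := Nat.le_floor (by exact_mod_cast ht)
  have hMt : t ≤ 2 * ⌊t⌋₊ := by
    have := Nat.lt_floor_add_one t
    have : (2 : ℝ) ≤ ⌊t⌋₊ := by exact_mod_cast hM
    linarith
  calc t * log 2 / 10 ≤ ⌊t⌋₊ * log 2 / 5 := by
        have := log_pos one_lt_two; nlinarith
    _ ≤ #(Nat.primesLE ⌊t⌋₊) * log ⌊t⌋₊ := card_primesLE_mul_log_ge hM
    _ ≤ #(Nat.primesLE ⌊t⌋₊) * log t := by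
        gcongr
        exact Nat.floor_le (by linarith)

lemma card_primesLE_floor_div_ge {x : ℝ} {n : ℕ} (hn : 1 ≤ n) (hx : 2 * n ≤ x) :
    log 2 * x / (10 * log x) / n ≤ #(Nat.primesLE (⌊x⌋₊ / n)) := by
  have hn₀ : (0 : ℝ) < n := by exact_mod_cast hn
  have hn₁ : (1 : ℝ) ≤ n := by exact_mod_cast hn
  have hlog : 0 < log x := log_pos (by linarith)
  have ht : 2 ≤ x / n := (le_div_iff₀ hn₀).mpr hx
  rw [← Nat.floor_div_natCast, div_le_iff₀ hn₀, div_le_iff₀ (by positivity)]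
  calc log 2 * x = x / n * log 2 / 10 * (10 * n) := by field_simp
    _ ≤ #(Nat.primesLE ⌊x / n⌋₊) * log (x / n) * (10 * n) := by
        gcongr; exact card_primesLE_floor_mul_log_ge ht
    _ ≤ #(Nat.primesLE ⌊x / n⌋₊) * log x * (10 * n) := by
        gcongr; exact div_le_self (by linarith) hn₁
    _ = _ := by ring

lemma natLog_two_floor_le {x : ℝ} (hx : 1 ≤ x) : (Nat.log 2 ⌊x⌋₊ : ℝ) ≤ log x / log 2 := by
  calc (Nat.log 2 ⌊x⌋₊ : ℝ) ≤ logb 2 ⌊x⌋₊ := by exact_mod_cast Real.natLog_le_logb ⌊x⌋₊ 2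
    _ ≤ logb 2 x := logb_le_logb_of_le one_lt_two (mod_cast Nat.floor_pos.mpr hx)
        (Nat.floor_le (by linarith))
    _ = log x / log 2 := rfl

lemma sum_div_le_of_le_mul_prime {f : ℕ → ℝ} (hf₀ : ∀ m, 0 ≤ f m)
    (hf : ∀ n p, n ≠ 0 → p.Prime → f n ≤ f (n * p)) {x : ℝ} {T : ℕ} (hx : 2 ≤ x)
    (hT : 2 * T ≤ x) :
    ∑ n ∈ Icc 1 T, f n / n ≤ 10 / log 2 ^ 2 * (log x ^ 2 / x) * ∑ m ∈ Icc 1 ⌊x⌋₊, f m := by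
  have hl₂ : 0 < log 2 := log_pos one_lt_two
  have hlx : 0 < log x := log_pos (by linarith)
  have hprimes (n) (hn : n ∈ Icc 1 T) :
      log 2 * x / (10 * log x) / n ≤ #(Nat.primesLE (⌊x⌋₊ / n)) := by
    rw [mem_Icc] at hn
    refine card_primesLE_floor_div_ge hn.1 (le_trans ?_ hT)
    exact_mod_cast Nat.mul_le_mul_left 2 hn.2
  have key : log 2 * x / (10 * log x) * ∑ n ∈ Icc 1 T, f n / n
      ≤ log x / log 2 * ∑ m ∈ Icc 1 ⌊x⌋₊, f m := calc
    _ = ∑ n ∈ Icc 1 T, f n * (log 2 * x / (10 * log x) / n) := by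
        rw [mul_sum]; congr! 1; ring
    _ ≤ ∑ n ∈ Icc 1 T, f n * #(Nat.primesLE (⌊x⌋₊ / n)) := by
        gcongr with n hn
        · exact hf₀ n
        · exact hprimes n hn
    _ ≤ Nat.log 2 ⌊x⌋₊ * ∑ m ∈ Icc 1 ⌊x⌋₊, f m := sum_mul_card_primesLE_div_le hf₀ hf T ⌊x⌋₊
    _ ≤ _ := by
        gcongr
        · exact sum_nonneg fun m _ => hf₀ m
        · exact natLog_two_floor_le (by linarith)
  calc ∑ n ∈ Icc 1 T, f n / n
      = 10 * log x / (log 2 * x) * (log 2 * x / (10 * log x) * ∑ n ∈ Icc 1 T, f n / n) := by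
        field_simp
    _ ≤ 10 * log x / (log 2 * x) * (log x / log 2 * ∑ m ∈ Icc 1 ⌊x⌋₊, f m) := by gcongr
    _ = 10 / log 2 ^ 2 * (log x ^ 2 / x) * ∑ m ∈ Icc 1 ⌊x⌋₊, f m := by ring

/-- For any 2 ≤ y ≤ x,
Σ_{n ≤ x/y} τ(φ(n))/n ≪ ((log x)⁵ / x)·Σ_{n ≤ x} τ(φ(n)), with an absolute constant. -/
theorem sum_tau_phi_div_bound :
    ∃ C : ℝ, 0 < C ∧ ∀ x y : ℝ, 2 ≤ y → y ≤ x →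
      (∑ n ∈ Finset.Icc 1 ⌊x / y⌋₊, (tauN (Nat.totient n) : ℝ) / (n : ℝ)) ≤
        C * (Real.log x ^ 5 / x) * ∑ n ∈ Finset.Icc 1 ⌊x⌋₊, (tauN (Nat.totient n) : ℝ) := by
  have hl₂ : 0 < log 2 := log_pos one_lt_two
  refine ⟨10 / log 2 ^ 5, by positivity, fun x y h2y hyx => ?_⟩
  have hx : 2 ≤ x := h2y.trans hyx
  have hT : 2 * ⌊x / y⌋₊ ≤ x := by
    have := Nat.floor_le (div_nonneg (by linarith) (by linarith : (0 : ℝ) ≤ y))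
    rw [le_div_iff₀ (by linarith)] at this
    nlinarith
  have hf (n p : ℕ) (hn : n ≠ 0) (hp : p.Prime) :
      (tauN n.totient : ℝ) ≤ tauN (n * p).totient := by
    exact_mod_cast tauN_totient_le_of_dvd (mul_ne_zero hn hp.ne_zero) (dvd_mul_right n p)
  have hpow : (log x / log 2) ^ 2 ≤ (log x / log 2) ^ 5 :=
    pow_le_pow_right₀ ((one_le_div hl₂).mpr (log_le_log two_pos hx)) (by norm_num)
  have hS : 0 ≤ ∑ n ∈ Icc 1 ⌊x⌋₊, (tauN n.totient : ℝ) := sum_nonneg fun _ _ => by positivity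
  calc _ ≤ 10 / log 2 ^ 2 * (log x ^ 2 / x) * ∑ n ∈ Icc 1 ⌊x⌋₊, (tauN n.totient : ℝ) :=
        sum_div_le_of_le_mul_prime (fun _ => by positivity) hf hx hT
    _ = 10 / x * (log x / log 2) ^ 2 * ∑ n ∈ Icc 1 ⌊x⌋₊, (tauN n.totient : ℝ) := by ring
    _ ≤ 10 / x * (log x / log 2) ^ 5 * ∑ n ∈ Icc 1 ⌊x⌋₊, (tauN n.totient : ℝ) := by gcongr
    _ = _ := by ring
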